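/- arXiv:quant-ph/0408159 — 3 statements merged into one kernel-verified Lean document; each statement's English description precedes it below -/
import Mathlib

section
/- Let R and S be positive semidefinite operators on a finite-dimensional complex Hilbert space H. Then sup { Tr(X†Y + Y†X) : X, Y ∈ B(H), X†X = R, Y†Y = S } = 2 Tr[(R^{1/2} S R^{1/2})^{1/2}]. -/
/-!
Any two factorizations `Xᴴ * X = Bᴴ * B` of the same positive matrix differ by a unitary
factor, `X = U * B`. Writing `r = √R`, `s = √S` and `N = √(r S r)`, this gives `X = U r`,
`Y = V s` and `s r = W N` with `U, V, W` unitary, so that `Tr (Xᴴ Y) = Tr (Uᴴ V W N)`.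
For a unitary `G` and `N ≥ 0` one has `Re Tr (G N) ≤ Tr N`, which is the upper bound, and the
choice `X = r`, `Y = Wᴴ s` attains it.
-/

open Matrix
open scoped ComplexOrder Classical

noncomputable def msqrt {ι : Type*} [Fintype ι] [DecidableEq ι]
    (A : Matrix ι ι ℂ) : Matrix ι ι ℂ :=
  if h : A.PosSemidef then
    (h.1.eigenvectorUnitary : Matrix ι ι ℂ) *
      diagonal ((↑) ∘ Real.sqrt ∘ h.1.eigenvalues) *
      (star h.1.eigenvectorUnitary : Matrix ι ι ℂ)
  else 0

noncomputable def traceNorm {ι : Type*} [Fintype ι] [DecidableEq ι]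
    (A : Matrix ι ι ℂ) : ℝ :=
  ((msqrt (Aᴴ * A)).trace).re

noncomputable def uFid {ι : Type*} [Fintype ι] [DecidableEq ι]
    (ρ σ : Matrix ι ι ℂ) : ℝ :=
  ((msqrt (msqrt ρ * σ * msqrt ρ)).trace).re

def IsDensity {ι : Type*} [Fintype ι] (ρ : Matrix ι ι ℂ) : Prop :=
  ρ.PosSemidef ∧ ρ.trace = 1

open scoped InnerProductSpace MatrixOrder

theorem LinearMap.exists_linearIsometry_apply_eq_of_norm_eq {𝕜 E V : Type*} [RCLike 𝕜]
    [AddCommGroup E] [Module 𝕜 E] [NormedAddCommGroup V] [InnerProductSpace 𝕜 V]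
    [FiniteDimensional 𝕜 V] (f g : E →ₗ[𝕜] V) (h : ∀ x, ‖f x‖ = ‖g x‖) :
    ∃ W : V →ₗᵢ[𝕜] V, ∀ x, W (g x) = f x := by
  have hker : LinearMap.ker g ≤ LinearMap.ker f := fun x hx ↦ by
    rw [LinearMap.mem_ker] at hx ⊢
    rw [← norm_eq_zero, h, hx, norm_zero]
  let ℓ : LinearMap.range g →ₗ[𝕜] V :=
    (LinearMap.ker g).liftQ f hker ∘ₗ g.quotKerEquivRange.symm
  have hℓ (x : E) : ℓ ⟨g x, LinearMap.mem_range_self g x⟩ = f x := by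
    simp [ℓ, LinearMap.quotKerEquivRange_symm_apply_image]
  let L : LinearMap.range g →ₗᵢ[𝕜] V := ⟨ℓ, by rintro ⟨-, x, rfl⟩; rw [hℓ, h]; rfl⟩
  exact ⟨L.extend, fun x ↦ (L.extend_apply ⟨g x, _⟩).trans (hℓ x)⟩

namespace Matrix

variable {𝕜 ι : Type*} [RCLike 𝕜] [Fintype ι]

theorem exists_mem_unitaryGroup_eq_mul_of_conjTranspose_mul_self_eq [DecidableEq ι]
    {A B : Matrix ι ι 𝕜} (h : Aᴴ * A = Bᴴ * B) : ∃ U ∈ unitaryGroup ι 𝕜, A = U * B := by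
  let a := toEuclideanCLM (n := ι) (𝕜 := 𝕜) A
  let b := toEuclideanCLM (n := ι) (𝕜 := 𝕜) B
  have hab : star a * a = star b * b := by
    simp only [a, b, ← map_star, ← map_mul, star_eq_conjTranspose, h]
  have hnorm (x : EuclideanSpace 𝕜 ι) : ‖a x‖ = ‖b x‖ := by
    rw [← sq_eq_sq₀ (norm_nonneg _) (norm_nonneg _),
      ContinuousLinearMap.apply_norm_sq_eq_inner_adjoint_left,
      ContinuousLinearMap.apply_norm_sq_eq_inner_adjoint_left]
    exact congrArg (fun T : EuclideanSpace 𝕜 ι →L[𝕜] EuclideanSpace 𝕜 ι ↦ RCLike.re ⟪T x, x⟫_𝕜) hab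
  obtain ⟨W, hW⟩ := LinearMap.exists_linearIsometry_apply_eq_of_norm_eq
    (a : EuclideanSpace 𝕜 ι →ₗ[𝕜] EuclideanSpace 𝕜 ι) b hnorm
  let w : EuclideanSpace 𝕜 ι →L[𝕜] EuclideanSpace 𝕜 ι := W.toContinuousLinearMap
  have hw : star w * w = 1 := w.norm_map_iff_adjoint_comp_self.mp W.norm_map
  have hwb : a = w * b := ContinuousLinearMap.ext fun x ↦ (hW x).symm
  obtain ⟨U, hU⟩ := EquivLike.surjective (toEuclideanCLM (n := ι) (𝕜 := 𝕜)) w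
  refine ⟨U, ?_, ?_⟩
  · rw [mem_unitaryGroup_iff']
    apply EquivLike.injective (toEuclideanCLM (n := ι) (𝕜 := 𝕜))
    rw [map_mul, map_star, hU, hw, map_one]
  · apply EquivLike.injective (toEuclideanCLM (n := ι) (𝕜 := 𝕜))
    rw [map_mul, hU]
    exact hwb

theorem re_trace_mul_le_of_mem_unitaryGroup [DecidableEq ι] {G N : Matrix ι ι 𝕜}
    (hG : G ∈ unitaryGroup ι 𝕜) (hN : N.PosSemidef) :
    RCLike.re (G * N).trace ≤ RCLike.re N.trace := by
  obtain ⟨P, rfl⟩ := CStarAlgebra.nonneg_iff_eq_star_mul_self.mp hN.nonneg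
  rw [star_eq_conjTranspose, ← mul_assoc, trace_mul_cycle, trace_mul_comm Pᴴ]
  -- `2 (Tr N - Re Tr (G N)) = Tr (Dᴴ D) ≥ 0` for `D = Pᴴ - G Pᴴ`
  have hsq := (posSemidef_conjTranspose_mul_self (Pᴴ - G * Pᴴ)).trace_nonneg
  have hexp : (Pᴴ - G * Pᴴ)ᴴ * (Pᴴ - G * Pᴴ) =
      P * Pᴴ - (P * G * Pᴴ)ᴴ - P * G * Pᴴ + P * (Gᴴ * G) * Pᴴ := by
    simp only [conjTranspose_sub, conjTranspose_mul, conjTranspose_conjTranspose]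
    noncomm_ring
  rw [hexp, show Gᴴ * G = 1 from mem_unitaryGroup_iff'.mp hG, mul_one, trace_add, trace_sub,
    trace_sub, trace_conjTranspose] at hsq
  have hre := (RCLike.nonneg_iff.mp hsq).1
  simp only [map_add, map_sub, RCLike.star_def, RCLike.conj_re] at hre
  linarith

theorem re_trace_conjTranspose_mul_add (X Y : Matrix ι ι 𝕜) :
    RCLike.re (Xᴴ * Y + Yᴴ * X).trace = 2 * RCLike.re (Xᴴ * Y).trace := by
  rw [← conjTranspose_conjTranspose X, ← conjTranspose_mul, conjTranspose_conjTranspose,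
    trace_add, trace_conjTranspose, map_add, RCLike.star_def, RCLike.conj_re, two_mul]

theorem trace_conjTranspose_mul_of_mul_eq {r s W N : Matrix ι ι 𝕜} (hr : rᴴ = r)
    (hsr : s * r = W * N) (U V : Matrix ι ι 𝕜) :
    ((U * r)ᴴ * (V * s)).trace = (Uᴴ * V * W * N).trace := by
  rw [conjTranspose_mul, hr, mul_assoc, trace_mul_comm, mul_assoc, mul_assoc, mul_assoc, hsr]
  simp only [mul_assoc]

variable [DecidableEq ι]

theorem conjTranspose_sqrt (A : Matrix ι ι 𝕜) : (CFC.sqrt A)ᴴ = CFC.sqrt A :=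
  (CFC.sqrt_nonneg A).posSemidef.1

theorem PosSemidef.sqrt_mul_mul_sqrt {S : Matrix ι ι 𝕜} (hS : S.PosSemidef) (R : Matrix ι ι 𝕜) :
    (CFC.sqrt R * S * CFC.sqrt R).PosSemidef := by
  simpa only [conjTranspose_sqrt] using hS.conjTranspose_mul_mul_same (CFC.sqrt R)

theorem isGreatest_re_trace_conjTranspose_mul_add {R S : Matrix ι ι 𝕜} (hR : R.PosSemidef)
    (hS : S.PosSemidef) :
    IsGreatest {t : ℝ | ∃ X Y : Matrix ι ι 𝕜,
        Xᴴ * X = R ∧ Yᴴ * Y = S ∧ t = RCLike.re (Xᴴ * Y + Yᴴ * X).trace}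
      (2 * RCLike.re (CFC.sqrt (CFC.sqrt R * S * CFC.sqrt R)).trace) := by
  set r := CFC.sqrt R
  set s := CFC.sqrt S
  set N := CFC.sqrt (r * S * r)
  have hrH : rᴴ = r := conjTranspose_sqrt R
  have hr : rᴴ * r = R := by rw [hrH, CFC.sqrt_mul_sqrt_self R hR.nonneg]
  have hs : sᴴ * s = S := by rw [conjTranspose_sqrt, CFC.sqrt_mul_sqrt_self S hS.nonneg]
  have hNN : (s * r)ᴴ * (s * r) = Nᴴ * N := by
    rw [conjTranspose_sqrt, CFC.sqrt_mul_sqrt_self _ (hS.sqrt_mul_mul_sqrt R).nonneg,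
      conjTranspose_mul, hrH, ← hs]
    simp only [r, mul_assoc]
  obtain ⟨W, hW, hsr⟩ := exists_mem_unitaryGroup_eq_mul_of_conjTranspose_mul_self_eq hNN
  have htrace := trace_conjTranspose_mul_of_mul_eq hrH hsr
  refine ⟨⟨r, Wᴴ * s, hr, ?_, ?_⟩, ?_⟩
  · rw [conjTranspose_mul, conjTranspose_conjTranspose, mul_assoc, ← mul_assoc W,
      show W * Wᴴ = 1 from mem_unitaryGroup_iff.mp hW, one_mul, hs]
  · have hattained := htrace 1 Wᴴ
    rw [one_mul, conjTranspose_one, one_mul, show Wᴴ * W = 1 from mem_unitaryGroup_iff'.mp hW,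
      one_mul] at hattained
    rw [re_trace_conjTranspose_mul_add, hattained]
  · rintro t ⟨X, Y, hX, hY, rfl⟩
    obtain ⟨U, hU, rfl⟩ :=
      exists_mem_unitaryGroup_eq_mul_of_conjTranspose_mul_self_eq (hX.trans hr.symm)
    obtain ⟨V, hV, rfl⟩ :=
      exists_mem_unitaryGroup_eq_mul_of_conjTranspose_mul_self_eq (hY.trans hs.symm)
    have hG : star U * V * W ∈ unitaryGroup ι 𝕜 := mul_mem (mul_mem (Unitary.star_mem hU) hV) hW
    rw [re_trace_conjTranspose_mul_add, htrace]
    exact mul_le_mul_of_nonneg_left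
      (re_trace_mul_le_of_mem_unitaryGroup hG (CFC.sqrt_nonneg _).posSemidef) zero_le_two

end Matrix

theorem msqrt_eq_sqrt {ι : Type*} [Fintype ι] [DecidableEq ι] {A : Matrix ι ι ℂ}
    (hA : A.PosSemidef) : msqrt A = CFC.sqrt A := by
  rw [msqrt, dif_pos hA, CFC.sqrt_eq_cfc, cfc_nnreal_eq_real _ A, hA.1.cfc_eq]
  simp [IsHermitian.cfc, Function.comp_def, max_eq_left (hA.eigenvalues_nonneg _)]

/-- Lemma 1: sup over `X†X = R`, `Y†Y = S` of `Tr(X†Y + Y†X)` equals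
`2 Tr[(R^{1/2} S R^{1/2})^{1/2}]`, and the sup is attained. -/
theorem stmt1 {n : ℕ} (R S : Matrix (Fin n) (Fin n) ℂ)
    (hR : R.PosSemidef) (hS : S.PosSemidef) :
    IsGreatest
      {t : ℝ | ∃ X Y : Matrix (Fin n) (Fin n) ℂ,
        Xᴴ * X = R ∧ Yᴴ * Y = S ∧ t = ((Xᴴ * Y + Yᴴ * X).trace).re}
      (2 * ((msqrt (msqrt R * S * msqrt R)).trace).re) := by
  rw [msqrt_eq_sqrt hR, msqrt_eq_sqrt (hS.sqrt_mul_mul_sqrt R)]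
  simpa only [RCLike.re_to_complex] using Matrix.isGreatest_re_trace_conjTranspose_mul_add hR hS
end

section
/- Let Φ, Ψ be unital completely positive maps (quantum channels) on B(ℂⁿ) implemented by unitaries U, V, i.e. Φ(B) = U†BU and Ψ(B) = V†BV. Then the minimax fidelity f(Φ,Ψ) = inf_ρ |Tr(ρ U†V)|, over density operators ρ, equals dist(0, co(Sp(U†V))), the distance from the origin to the convex hull of the spectrum of W = U†V. -/
open Matrix
open scoped ComplexOrder Classical

/-! A normal matrix `W` has finite spectrum, so the continuous functional calculus splits it
as `W = ∑ μ • P μ` with `P μ = 1_{μ}(W)` orthogonal projections summing to `1`. For a density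
matrix `ρ` the weights `Tr(ρ P μ)` are nonnegative and sum to `1`, so `Tr(ρ W)` lies in the
convex hull of the spectrum; conversely `P μ / Tr(P μ)` is a density matrix realising the
eigenvalue `μ`, and the set of values `Tr(ρ W)` is convex. The minimax fidelity is then the
smallest modulus of a point of that convex hull. -/

section SpectralProjection

variable {A : Type*} [CStarAlgebra A]

noncomputable def spectralProjection (a : A) (μ : ℂ) : A :=
  cfc (fun z : ℂ => if z = μ then (1 : ℂ) else 0) a

variable {a : A}

lemma isStarProjection_spectralProjection (ha : (spectrum ℂ a).Finite) (μ : ℂ) :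
    IsStarProjection (spectralProjection a μ) where
  isIdempotentElem := by
    rw [IsIdempotentElem, spectralProjection,
      ← cfc_mul _ _ a (ha.continuousOn _) (ha.continuousOn _)]
    congr 1 with z
    split_ifs <;> simp
  isSelfAdjoint := by
    rw [IsSelfAdjoint, spectralProjection, ← cfc_star]
    congr 1 with z
    split_ifs <;> simp

lemma mul_spectralProjection [IsStarNormal a] (ha : (spectrum ℂ a).Finite) (μ : ℂ) :
    a * spectralProjection a μ = μ • spectralProjection a μ := by
  have h := cfc_mul (fun z : ℂ => z) (fun z => if z = μ then (1 : ℂ) else 0) a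
    (ha.continuousOn _) (ha.continuousOn _)
  rw [cfc_id' ℂ a] at h
  rw [spectralProjection, ← h, ← cfc_smul μ _ a (ha.continuousOn _)]
  congr 1 with z
  split_ifs with hz <;> simp [hz]

lemma sum_spectralProjection [IsStarNormal a] (ha : (spectrum ℂ a).Finite) :
    ∑ μ ∈ ha.toFinset, spectralProjection a μ = 1 := by
  simp only [spectralProjection]
  rw [← cfc_sum _ _ _ (fun μ _ => ha.continuousOn _), ← cfc_one ℂ a]
  refine cfc_congr fun z hz => ?_
  simp [Finset.sum_apply, ha.mem_toFinset.mpr hz]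

lemma sum_smul_spectralProjection [IsStarNormal a] (ha : (spectrum ℂ a).Finite) :
    ∑ μ ∈ ha.toFinset, μ • spectralProjection a μ = a := by
  simp only [← mul_spectralProjection ha, ← Finset.mul_sum, sum_spectralProjection ha, mul_one]

lemma spectralProjection_ne_zero [IsStarNormal a] (ha : (spectrum ℂ a).Finite) {μ : ℂ}
    (hμ : μ ∈ spectrum ℂ a) : spectralProjection a μ ≠ 0 := by
  intro h
  rw [spectralProjection, ← cfc_zero ℂ a] at h
  simpa using eqOn_of_cfc_eq_cfc h (ha.continuousOn _) (ha.continuousOn _) ‹_› hμ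

end SpectralProjection

section Matrix

variable {ι : Type*} [Fintype ι]

lemma IsStarProjection.posSemidef {𝕜 : Type*} [RCLike 𝕜] {P : Matrix ι ι 𝕜}
    (hP : IsStarProjection P) : P.PosSemidef := by
  simpa [← star_eq_conjTranspose, hP.isSelfAdjoint.star_eq, hP.isIdempotentElem.eq]
    using posSemidef_conjTranspose_mul_self P

lemma Matrix.PosSemidef.trace_mul_isStarProjection_nonneg {𝕜 : Type*} [RCLike 𝕜]
    {ρ P : Matrix ι ι 𝕜} (hρ : ρ.PosSemidef) (hP : IsStarProjection P) :
    0 ≤ (ρ * P).trace := by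
  have h : (ρ * P).trace = (P * ρ * Pᴴ).trace := by
    rw [← star_eq_conjTranspose, hP.isSelfAdjoint.star_eq, trace_mul_cycle,
      hP.isIdempotentElem.eq, trace_mul_comm]
  exact h ▸ (hρ.mul_mul_conjTranspose_same P).trace_nonneg

lemma isDensity_inv_trace_smul {P : Matrix ι ι ℂ} (hP : P.PosSemidef) (h0 : P ≠ 0) :
    IsDensity (P.trace⁻¹ • P) := by
  have htr : 0 < P.trace := hP.trace_nonneg.lt_of_ne' (hP.trace_eq_zero_iff.not.mpr h0)
  refine ⟨hP.smul (inv_nonneg.mpr htr.le), ?_⟩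
  rw [trace_smul, smul_eq_mul, inv_mul_cancel₀ htr.ne']

lemma convex_setOf_isDensity : Convex ℝ {ρ : Matrix ι ι ℂ | IsDensity ρ} := by
  rintro ρ ⟨hρ, hρ1⟩ σ ⟨hσ, hσ1⟩ a b ha hb hab
  refine ⟨(hρ.smul ha).add (hσ.smul hb), ?_⟩
  rw [trace_add, trace_smul, trace_smul, hρ1, hσ1, Complex.real_smul, Complex.real_smul,
    mul_one, mul_one, ← Complex.ofReal_add, hab, Complex.ofReal_one]

variable [DecidableEq ι] {W : Matrix ι ι ℂ}

section
open scoped Matrix.Norms.L2Operator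

lemma trace_mul_mem_convexHull_spectrum [IsStarNormal W] {ρ : Matrix ι ι ℂ}
    (hρ : IsDensity ρ) :
    (ρ * W).trace ∈ convexHull ℝ (spectrum ℂ W) := by
  have ha := W.finite_spectrum
  have hw : ∀ μ, 0 ≤ (ρ * spectralProjection W μ).trace := fun μ =>
    hρ.1.trace_mul_isStarProjection_nonneg (isStarProjection_spectralProjection ha μ)
  have hsum : ∑ μ ∈ ha.toFinset, (ρ * spectralProjection W μ).trace.re = 1 := by
    rw [← Complex.re_sum, ← trace_sum, ← Finset.mul_sum, sum_spectralProjection ha, mul_one,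
      hρ.2, Complex.one_re]
  have htr :
      (ρ * W).trace = ∑ μ ∈ ha.toFinset, (ρ * spectralProjection W μ).trace.re • μ := by
    conv_lhs => rw [← sum_smul_spectralProjection ha]
    rw [Finset.mul_sum, trace_sum]
    refine Finset.sum_congr rfl fun μ _ => ?_
    rw [mul_smul_comm, trace_smul, Complex.real_smul,
      ← Complex.eq_re_of_ofReal_le (Complex.ofReal_zero ▸ hw μ),
      smul_eq_mul, mul_comm]
  rw [htr]
  exact (convex_convexHull ℝ _).sum_mem (fun μ _ => (Complex.nonneg_iff.mp (hw μ)).1) hsum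
    fun μ hμ => subset_convexHull ℝ _ (ha.mem_toFinset.mp hμ)

lemma mem_image_trace_mul_of_mem_spectrum [IsStarNormal W] {μ : ℂ}
    (hμ : μ ∈ spectrum ℂ W) :
    μ ∈ (fun ρ => (ρ * W).trace) '' {ρ | IsDensity ρ} := by
  have ha := W.finite_spectrum
  have hP := isStarProjection_spectralProjection ha μ
  refine ⟨_, isDensity_inv_trace_smul hP.posSemidef (spectralProjection_ne_zero ha hμ), ?_⟩
  have htr : (spectralProjection W μ).trace ≠ 0 :=
    hP.posSemidef.trace_eq_zero_iff.not.mpr (spectralProjection_ne_zero ha hμ)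
  simp only [smul_mul_assoc, trace_smul, trace_mul_comm _ W, mul_spectralProjection ha, smul_eq_mul]
  field_simp

end

lemma image_trace_mul_setOf_isDensity [IsStarNormal W] :
    (fun ρ => (ρ * W).trace) '' {ρ | IsDensity ρ} = convexHull ℝ (spectrum ℂ W) := by
  refine subset_antisymm ?_ (convexHull_min (fun μ => mem_image_trace_mul_of_mem_spectrum) ?_)
  · rintro _ ⟨ρ, hρ, rfl⟩
    exact trace_mul_mem_convexHull_spectrum hρ
  · refine convex_setOf_isDensity.is_linear_image ⟨fun ρ σ => ?_, fun c ρ => ?_⟩ <;>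
      simp [add_mul, trace_add, trace_smul]

end Matrix

lemma sInf_norm_image_eq_infDist {E : Type*} [SeminormedAddCommGroup E] (s : Set E) :
    sInf ((‖·‖) '' s) = Metric.infDist 0 s := by
  simp only [Metric.infDist_eq_iInf, sInf_image', dist_zero_left]

/-- For unitarily implemented channels `Θ_U, Θ_V`, the minimax fidelity
`inf_ρ |Tr(ρ U†V)|` equals the distance from the origin to the convex hull of
the spectrum of `W = U†V`. -/
theorem stmt8 {n : ℕ} (U V : Matrix.unitaryGroup (Fin n) ℂ) :
    sInf {t : ℝ | ∃ ρ : Matrix (Fin n) (Fin n) ℂ, IsDensity ρ ∧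
        t = ‖((ρ * ((U : Matrix (Fin n) (Fin n) ℂ)ᴴ * (V : Matrix (Fin n) (Fin n) ℂ))).trace)‖} =
      Metric.infDist (0 : ℂ)
        (convexHull ℝ (spectrum ℂ ((U : Matrix (Fin n) (Fin n) ℂ)ᴴ * (V : Matrix (Fin n) (Fin n) ℂ)))) := by
  have : IsStarNormal ((U : Matrix (Fin n) (Fin n) ℂ)ᴴ * V) :=
    isStarNormal_of_mem_unitary (mul_mem (Unitary.star_mem U.2) V.2)
  rw [← image_trace_mul_setOf_isDensity, ← sInf_norm_image_eq_infDist, Set.image_image]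
  congr 1 with t
  simp [eq_comm]
end

section
/- For any completely bounded linear map Λ : B(h) → B(g) between algebras over finite-dimensional Hilbert spaces with dim g = m, the CB norm is attained at matrix level m: ‖Λ‖_cb = ‖Λ ⊗ id_{M_m}‖, where M_m is the algebra of m×m complex matrices. -/
open Matrix

/-- The ℓ²→ℓ² operator norm of a matrix. -/
noncomputable def l2OpNorm {ι : Type*} [Fintype ι] [DecidableEq ι]
    (A : Matrix ι ι ℂ) : ℝ :=
  ‖Matrix.toEuclideanCLM (𝕜 := ℂ) A‖

/-- The ampliation `Λ ⊗ id_{M_r}` of a map on matrix algebras. -/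
noncomputable def tensorId' {n m : ℕ} (r : ℕ)
    (Λ : Matrix (Fin n) (Fin n) ℂ → Matrix (Fin m) (Fin m) ℂ)
    (M : Matrix (Fin n × Fin r) (Fin n × Fin r) ℂ) :
    Matrix (Fin m × Fin r) (Fin m × Fin r) ℂ :=
  fun p q => (Λ (Matrix.of fun i k => M (i, p.2) (k, q.2))) p.1 q.1

/-- The operator norm (w.r.t. ℓ² operator norms) of a map on matrix algebras. -/
noncomputable def mapOpNorm {α β : Type*} [Fintype α] [DecidableEq α]
    [Fintype β] [DecidableEq β]
    (Λ : Matrix α α ℂ → Matrix β β ℂ) : ℝ :=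
  sSup {t : ℝ | ∃ A, l2OpNorm A ≤ 1 ∧ t = l2OpNorm (Λ A)}

/-- The norm of complete boundedness of a map on matrix algebras. -/
noncomputable def cbNorm {n m : ℕ}
    (Λ : Matrix (Fin n) (Fin n) ℂ → Matrix (Fin m) (Fin m) ℂ) : ℝ :=
  sSup {t : ℝ | ∃ r : ℕ, t = mapOpNorm (tensorId' r Λ)}

/-!
Smith's argument. The `m` rows of a vector `ξ ∈ ℂᵐ ⊗ ℂʳ` span a subspace of `ℂʳ` of dimension at
most `m`, so `ξ = (1 ⊗ V) ξ'` for a contraction `V : ℂᵐ → ℂʳ` and some `ξ' ∈ ℂᵐ ⊗ ℂᵐ` with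
`‖ξ'‖ = ‖ξ‖`. Factoring both vectors of `⟪(Λ ⊗ id_r)(A) ξ, η⟫` in this way, and using that `Λ ⊗ id`
commutes with the compressions `X ↦ (1 ⊗ W*) X (1 ⊗ V)`, turns it into `⟪(Λ ⊗ id_m)(B) ξ', η'⟫`
with `B = (1 ⊗ W*) A (1 ⊗ V)` and `‖B‖ ≤ ‖A‖`. Hence `‖Λ ⊗ id_r‖ ≤ ‖Λ ⊗ id_m‖` for every `r`, and
the supremum defining the cb norm is attained at `r = m`.
-/

open Module WithLp
open scoped Matrix.Norms.L2Operator Kronecker InnerProductSpace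

section FactorThroughContraction

variable {𝕜 E F : Type*} [RCLike 𝕜] [NormedAddCommGroup E] [InnerProductSpace 𝕜 E]
  [NormedAddCommGroup F] [InnerProductSpace 𝕜 F] [FiniteDimensional 𝕜 F]

theorem exists_linearIsometry_of_finrank_le [FiniteDimensional 𝕜 E]
    (h : finrank 𝕜 E ≤ finrank 𝕜 F) : Nonempty (E →ₗᵢ[𝕜] F) := by
  let b := stdOrthonormalBasis 𝕜 E
  let c := stdOrthonormalBasis 𝕜 F
  let f := b.toBasis.constr 𝕜 (c ∘ Fin.castLE h)
  have hf : f ∘ b.toBasis = c ∘ Fin.castLE h := funext fun i => b.toBasis.constr_basis 𝕜 _ i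
  refine ⟨f.isometryOfOrthonormal (v := b.toBasis) (by simp [b.orthonormal]) ?_⟩
  rw [hf]
  exact c.orthonormal.comp _ (Fin.castLE_injective h)

theorem Submodule.exists_contraction_comp_linearIsometry_eq_subtype (K : Submodule 𝕜 E)
    [FiniteDimensional 𝕜 K] (h : finrank 𝕜 K ≤ finrank 𝕜 F) :
    ∃ (V : F →L[𝕜] E) (J : K →ₗᵢ[𝕜] F), ‖V‖ ≤ 1 ∧ ∀ x, V (J x) = x := by
  obtain ⟨J⟩ := exists_linearIsometry_of_finrank_le h
  have := FiniteDimensional.complete 𝕜 K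
  have := FiniteDimensional.complete 𝕜 F
  refine ⟨K.subtypeL ∘L J.toContinuousLinearMap.adjoint, J, ?_, fun x => ?_⟩
  · calc _ ≤ ‖K.subtypeL‖ * ‖J.toContinuousLinearMap.adjoint‖ :=
          ContinuousLinearMap.opNorm_comp_le _ _
      _ ≤ 1 * 1 := by
        gcongr
        · exact K.norm_subtypeL_le
        · rw [LinearIsometryEquiv.norm_map]
          exact J.norm_toContinuousLinearMap_le
      _ = 1 := one_mul 1
  · exact congr(K.subtype ($(J.adjoint_comp_self) x))

end FactorThroughContraction

theorem EuclideanSpace.norm_sq_eq_sum_norm_sq_curry {𝕜 ι κ : Type*} [RCLike 𝕜] [Fintype ι]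
    [Fintype κ] (v : EuclideanSpace 𝕜 (ι × κ)) :
    ‖v‖ ^ 2 = ∑ i, ‖toLp 2 fun k => v (i, k)‖ ^ 2 := by
  simp only [EuclideanSpace.norm_sq_eq, Fintype.sum_prod_type]

theorem Matrix.one_kronecker_mul_mul_one_kronecker_apply {R α κ κ' : Type*} [CommSemiring R]
    [Fintype α] [DecidableEq α] [Fintype κ] (P : Matrix κ' κ R) (A : Matrix (α × κ) (α × κ) R)
    (Q : Matrix κ κ' R) (i j : α) (k l : κ') :
    (((1 : Matrix α α R) ⊗ₖ P) * A * ((1 : Matrix α α R) ⊗ₖ Q)) (i, k) (j, l) =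
      ∑ s, ∑ t, P k s * A (i, s) (j, t) * Q t l := by
  simp only [mul_apply, kroneckerMap_apply, one_apply, ite_mul, one_mul, zero_mul,
    Fintype.sum_prod_type, Finset.sum_ite_irrel, Finset.sum_const_zero, Finset.sum_ite_eq,
    Finset.mem_univ, ↓reduceIte, mul_ite, Finset.sum_mul, mul_zero, Finset.sum_ite_eq']
  exact Finset.sum_comm

section Kronecker

variable {𝕜 ι κ μ : Type*} [RCLike 𝕜] [Fintype ι] [DecidableEq ι] [Fintype μ]

theorem Matrix.one_kronecker_mulVec_apply (Q : Matrix κ μ 𝕜) (v : ι × μ → 𝕜) (i : ι) (k : κ) :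
    (((1 : Matrix ι ι 𝕜) ⊗ₖ Q) *ᵥ v) (i, k) = (Q *ᵥ fun l => v (i, l)) k := by
  simp [mulVec, dotProduct, Fintype.sum_prod_type, one_apply, ite_mul]

variable [Fintype κ] [DecidableEq μ]

theorem Matrix.l2_opNorm_one_kronecker_le (Q : Matrix κ μ 𝕜) :
    ‖(1 : Matrix ι ι 𝕜) ⊗ₖ Q‖ ≤ ‖Q‖ := by
  rw [l2_opNorm_def]
  refine ContinuousLinearMap.opNorm_le_bound _ (norm_nonneg Q) fun v => ?_
  refine le_of_sq_le_sq ?_ (by positivity)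
  rw [mul_pow, EuclideanSpace.norm_sq_eq_sum_norm_sq_curry,
    EuclideanSpace.norm_sq_eq_sum_norm_sq_curry, Finset.mul_sum]
  gcongr with i
  rw [← mul_pow]
  gcongr
  refine (congrArg norm ?_).trans_le (Q.l2_opNorm_mulVec (toLp 2 fun l => v (i, l)))
  ext k
  simp [one_kronecker_mulVec_apply]

theorem Matrix.l2_opNorm_one_kronecker_mul_mul_le [DecidableEq κ] (P : Matrix κ μ 𝕜)
    (A : Matrix (ι × μ) (ι × μ) 𝕜) (Q : Matrix μ κ 𝕜) :
    ‖((1 : Matrix ι ι 𝕜) ⊗ₖ P) * A * ((1 : Matrix ι ι 𝕜) ⊗ₖ Q)‖ ≤ ‖P‖ * ‖A‖ * ‖Q‖ :=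
  calc _ ≤ ‖(1 : Matrix ι ι 𝕜) ⊗ₖ P‖ * ‖A‖ * ‖(1 : Matrix ι ι 𝕜) ⊗ₖ Q‖ :=
        (l2_opNorm_mul _ _).trans (by gcongr; exact l2_opNorm_mul _ _)
    _ ≤ ‖P‖ * ‖A‖ * ‖Q‖ := by gcongr <;> exact l2_opNorm_one_kronecker_le _

end Kronecker

section Compression

variable {𝕜 ι κ : Type*} [RCLike 𝕜] [Fintype ι] [DecidableEq ι] [Fintype κ]

theorem exists_contraction_one_kronecker_mulVec_eq (ξ : EuclideanSpace 𝕜 (ι × κ)) :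
    ∃ Q : Matrix κ ι 𝕜, ‖Q‖ ≤ 1 ∧ ∃ ξ' : EuclideanSpace 𝕜 (ι × ι),
      ‖ξ'‖ = ‖ξ‖ ∧ ((1 : Matrix ι ι 𝕜) ⊗ₖ Q) *ᵥ ξ' = ξ := by
  let x : ι → EuclideanSpace 𝕜 κ := fun i => toLp 2 fun k => ξ (i, k)
  let K := Submodule.span 𝕜 (Set.range x)
  have hK : finrank 𝕜 K ≤ finrank 𝕜 (EuclideanSpace 𝕜 ι) := by
    rw [finrank_euclideanSpace]
    exact finrank_range_le_card x
  obtain ⟨V, J, hV, hVJ⟩ := K.exists_contraction_comp_linearIsometry_eq_subtype hK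
  let y : ι → EuclideanSpace 𝕜 ι := fun i => J ⟨x i, Submodule.subset_span ⟨i, rfl⟩⟩
  let e := (toEuclideanLin (𝕜 := 𝕜) (m := κ) (n := ι)).trans LinearMap.toContinuousLinearMap
  have hQ : e (e.symm V) = V := e.apply_symm_apply V
  refine ⟨e.symm V, ?_, toLp 2 fun p => y p.1 p.2, ?_, ?_⟩
  · rwa [l2_opNorm_def, hQ]
  · refine (sq_eq_sq₀ (norm_nonneg _) (norm_nonneg _)).mp ?_
    simp only [EuclideanSpace.norm_sq_eq_sum_norm_sq_curry]
    refine Finset.sum_congr rfl fun i _ => ?_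
    simp [y, x]
  · ext ⟨i, k⟩
    rw [one_kronecker_mulVec_apply]
    change (e (e.symm V) (y i)) k = _
    rw [hQ, hVJ]

theorem Matrix.one_kronecker_mulVec_dotProduct_star (T : Matrix (ι × κ) (ι × κ) 𝕜)
    (P Q : Matrix κ ι 𝕜) (a b : ι × ι → 𝕜) :
    (((1 : Matrix ι ι 𝕜) ⊗ₖ P) *ᵥ b) ⬝ᵥ star (T *ᵥ (((1 : Matrix ι ι 𝕜) ⊗ₖ Q) *ᵥ a)) =
      b ⬝ᵥ star ((((1 : Matrix ι ι 𝕜) ⊗ₖ Pᴴ) * T * ((1 : Matrix ι ι 𝕜) ⊗ₖ Q)) *ᵥ a) := by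
  rw [dotProduct_comm, dotProduct_mulVec, dotProduct_comm]
  simp [star_mulVec, vecMul_vecMul, conjTranspose_mul, Matrix.mul_assoc, conjTranspose_kronecker]

theorem Matrix.l2_opNorm_le_of_forall_compression [DecidableEq κ] (T : Matrix (ι × κ) (ι × κ) 𝕜)
    {c : ℝ} (hc : 0 ≤ c)
    (h : ∀ (P : Matrix ι κ 𝕜) (Q : Matrix κ ι 𝕜), ‖P‖ ≤ 1 → ‖Q‖ ≤ 1 →
      ‖((1 : Matrix ι ι 𝕜) ⊗ₖ P) * T * ((1 : Matrix ι ι 𝕜) ⊗ₖ Q)‖ ≤ c) :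
    ‖T‖ ≤ c := by
  rw [← l2_opNorm_toEuclideanCLM]
  refine ContinuousLinearMap.opNorm_le_of_re_inner_le hc fun ξ η hξ hη => ?_
  obtain ⟨Q, hQ, ξ', hξ', hξQ⟩ := exists_contraction_one_kronecker_mulVec_eq ξ
  obtain ⟨P, hP, η', hη', hηP⟩ := exists_contraction_one_kronecker_mulVec_eq η
  set B := ((1 : Matrix ι ι 𝕜) ⊗ₖ Pᴴ) * T * ((1 : Matrix ι ι 𝕜) ⊗ₖ Q)
  have hinner : ⟪toEuclideanCLM (𝕜 := 𝕜) T ξ, η⟫_𝕜 = ⟪toEuclideanCLM (𝕜 := 𝕜) B ξ', η'⟫_𝕜 := by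
    simp only [EuclideanSpace.inner_eq_star_dotProduct, ofLp_toEuclideanCLM, ← hξQ, ← hηP]
    exact one_kronecker_mulVec_dotProduct_star T P Q _ _
  calc RCLike.re ⟪toEuclideanCLM (𝕜 := 𝕜) T ξ, η⟫_𝕜
      = RCLike.re ⟪toEuclideanCLM (𝕜 := 𝕜) B ξ', η'⟫_𝕜 := by rw [hinner]
    _ ≤ ‖toEuclideanCLM (𝕜 := 𝕜) B ξ'‖ * ‖η'‖ := re_inner_le_norm _ _
    _ ≤ ‖B‖ * ‖ξ'‖ * ‖η'‖ := by gcongr; exact (toEuclideanCLM (𝕜 := 𝕜) B).le_opNorm ξ'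
    _ ≤ c * 1 * 1 := by
      rw [hξ', hξ, hη', hη]
      gcongr
      exact h _ _ (by rwa [l2_opNorm_conjTranspose]) hQ
    _ = c := by ring

end Compression

theorem mapOpNorm_eq_norm_toContinuousLinearMap {α β : Type*} [Fintype α] [DecidableEq α]
    [Fintype β] [DecidableEq β] (f : Matrix α α ℂ →ₗ[ℂ] Matrix β β ℂ) :
    mapOpNorm f = ‖LinearMap.toContinuousLinearMap f‖ := by
  rw [mapOpNorm, ← ContinuousLinearMap.sSup_unitClosedBall_eq_norm]
  refine congrArg sSup (Set.ext fun t => ⟨?_, ?_⟩)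
  · rintro ⟨A, hA, rfl⟩
    exact ⟨A, mem_closedBall_zero_iff.mpr hA, rfl⟩
  · rintro ⟨A, hA, rfl⟩
    have hA' : ‖A‖ ≤ 1 := mem_closedBall_zero_iff.mp hA
    exact ⟨A, hA', rfl⟩

section Ampliation

variable {n m : ℕ}

theorem tensorId'_apply (r : ℕ) (f : Matrix (Fin n) (Fin n) ℂ → Matrix (Fin m) (Fin m) ℂ)
    (M : Matrix (Fin n × Fin r) (Fin n × Fin r) ℂ) (p q : Fin m × Fin r) :
    tensorId' r f M p q = f (M.submatrix (·, p.2) (·, q.2)) p.1 q.1 :=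
  rfl

variable (Λ : Matrix (Fin n) (Fin n) ℂ →ₗ[ℂ] Matrix (Fin m) (Fin m) ℂ)

theorem tensorId'_one_kronecker_mul_mul {r s : ℕ} (P : Matrix (Fin s) (Fin r) ℂ)
    (A : Matrix (Fin n × Fin r) (Fin n × Fin r) ℂ) (Q : Matrix (Fin r) (Fin s) ℂ) :
    tensorId' s Λ
        (((1 : Matrix (Fin n) (Fin n) ℂ) ⊗ₖ P) * A * ((1 : Matrix (Fin n) (Fin n) ℂ) ⊗ₖ Q)) =
      ((1 : Matrix (Fin m) (Fin m) ℂ) ⊗ₖ P) * tensorId' r Λ A *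
        ((1 : Matrix (Fin m) (Fin m) ℂ) ⊗ₖ Q) := by
  ext ⟨p, k⟩ ⟨q, l⟩
  have hblock : (((1 : Matrix (Fin n) (Fin n) ℂ) ⊗ₖ P) * A *
      ((1 : Matrix (Fin n) (Fin n) ℂ) ⊗ₖ Q)).submatrix (·, k) (·, l) =
      ∑ s', ∑ t, (P k s' * Q t l) • A.submatrix (·, s') (·, t) := by
    ext i j
    simp only [submatrix_apply, one_kronecker_mul_mul_one_kronecker_apply, Matrix.sum_apply,
      Matrix.smul_apply, smul_eq_mul]
    exact Finset.sum_congr rfl fun _ _ => Finset.sum_congr rfl fun _ _ => by ring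
  rw [tensorId'_apply, hblock, one_kronecker_mul_mul_one_kronecker_apply]
  simp only [map_sum, map_smul, Matrix.sum_apply, Matrix.smul_apply, smul_eq_mul, tensorId'_apply]
  exact Finset.sum_congr rfl fun _ _ => Finset.sum_congr rfl fun _ _ => by ring

noncomputable def ampliation (r : ℕ) :
    Matrix (Fin n × Fin r) (Fin n × Fin r) ℂ →ₗ[ℂ] Matrix (Fin m × Fin r) (Fin m × Fin r) ℂ where
  toFun := tensorId' r Λ
  map_add' A B := by
    ext
    simp only [tensorId'_apply, submatrix_add, Pi.add_apply, map_add, Matrix.add_apply]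
  map_smul' c A := by
    ext
    simp only [tensorId'_apply, submatrix_smul, Pi.smul_apply, map_smul, Matrix.smul_apply,
      RingHom.id_apply]

theorem norm_ampliation_le (r : ℕ) :
    ‖LinearMap.toContinuousLinearMap (ampliation Λ r)‖ ≤
      ‖LinearMap.toContinuousLinearMap (ampliation Λ m)‖ := by
  set Φ := LinearMap.toContinuousLinearMap (ampliation Λ m)
  refine ContinuousLinearMap.opNorm_le_bound _ (by positivity) fun A => ?_
  refine l2_opNorm_le_of_forall_compression _ (by positivity) fun P Q hP hQ => ?_
  calc ‖((1 : Matrix (Fin m) (Fin m) ℂ) ⊗ₖ P) * tensorId' r Λ A *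
        ((1 : Matrix (Fin m) (Fin m) ℂ) ⊗ₖ Q)‖
      = ‖Φ (((1 : Matrix (Fin n) (Fin n) ℂ) ⊗ₖ P) * A *
          ((1 : Matrix (Fin n) (Fin n) ℂ) ⊗ₖ Q))‖ := by
        rw [← tensorId'_one_kronecker_mul_mul]
        rfl
    _ ≤ ‖Φ‖ * (‖P‖ * ‖A‖ * ‖Q‖) :=
        (Φ.le_opNorm _).trans (by gcongr; exact l2_opNorm_one_kronecker_mul_mul_le _ _ _)
    _ ≤ ‖Φ‖ * (1 * ‖A‖ * 1) := by gcongr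
    _ = ‖Φ‖ * ‖A‖ := by ring

end Ampliation

/-- Smith's theorem: for a linear map `Λ : B(h) → B(g)` with `dim g = m`, the CB
norm is attained at matrix level `m`: `‖Λ‖_cb = ‖Λ ⊗ id_{M_m}‖`. -/
theorem stmt19 {n m : ℕ}
    (Λ : Matrix (Fin n) (Fin n) ℂ →ₗ[ℂ] Matrix (Fin m) (Fin m) ℂ) :
    cbNorm (⇑Λ) = mapOpNorm (tensorId' m (⇑Λ)) := by
  have hmap : ∀ r, mapOpNorm (tensorId' r Λ) =
      ‖LinearMap.toContinuousLinearMap (ampliation Λ r)‖ :=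
    fun r => mapOpNorm_eq_norm_toContinuousLinearMap (ampliation Λ r)
  refine IsGreatest.csSup_eq ⟨⟨m, rfl⟩, ?_⟩
  rintro _ ⟨r, rfl⟩
  rw [hmap, hmap]
  exact norm_ampliation_le Λ r
end
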